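/- With the matrix R from the previous construction (first column (h_1,…,h_{s-1})^T, first row (h_1, -δ_2, …, -δ_{s-1}), diagonal entries Δ_2, …, Δ_{s-1}, zeros elsewhere), the determinant of R equals d · d_1^{s-3} / (gcd(d_1,d_2) · gcd(d_1,d_3) ⋯ gcd(d_1,d_{s-1})). -/

import Mathlib

/-!
Multiplying column `j ≠ 0` of `R` by `gcd(d_1, d_j)` clears its denominators and leaves an
arrowhead matrix with first column `h`, first row `(h_1, -d_2, …, -d_{s-1})` and constant
diagonal `d_1`. Its determinant is `d_1^{s-3} · Σ h_i d_i = d_1^{s-3} · d`, and the scaling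
multiplied the determinant by `∏_{i ≥ 2} gcd(d_1, d_i)`.
-/

open Finset

namespace Matrix

variable {R : Type*} [CommRing R] {n : ℕ}

def arrowhead (a : R) (row col : Fin (n + 1) → R) : Matrix (Fin (n + 1)) (Fin (n + 1)) R :=
  of fun i j => if j = 0 then col i else if i = 0 then row j else if i = j then a else 0

/-- Multiplying column `0` by `a` and subtracting `row k` times row `k` from row `0` for
every `k ≠ 0` turns the arrowhead matrix lower triangular. -/
theorem det_arrowhead {a : R} (ha : IsLeftRegular a) (row col : Fin (n + 2) → R) :
    (arrowhead a row col).det =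
      a ^ n * (a * col 0 - ∑ j : Fin (n + 1), row j.succ * col j.succ) := by
  set A := arrowhead a row col
  set c : Fin (n + 2) → R := Fin.cons a fun k => -row k.succ
  set N := A.updateRow 0 (∑ k, c k • A k)
  have hN0 : ∀ j, N 0 j =
      if j = 0 then a * col 0 - ∑ k : Fin (n + 1), row k.succ * col k.succ else 0 := by
    intro j
    rw [show N 0 j = _ from congrFun (updateRow_self (M := A)) j, Finset.sum_apply,
      Fin.sum_univ_succ]
    cases j using Fin.cases
    · simp [A, c, arrowhead, sub_eq_add_neg]
    · simp [A, c, arrowhead, Fin.succ_ne_zero, Fin.succ_inj, mul_comm]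
  have hNtri : N.IsLowerTriangular := by
    intro i j (hij : i < j)
    obtain rfl | hi := eq_or_ne i 0
    · rw [hN0, if_neg (ne_zero_of_lt hij)]
    · simp [N, A, arrowhead, hi, ne_zero_of_lt hij, hij.ne]
  have hdiag : ∀ k : Fin (n + 1), N k.succ k.succ = a := fun k => by
    simp [N, A, arrowhead, Fin.succ_ne_zero]
  apply ha
  calc a * A.det = N.det := by rw [det_updateRow_sum, smul_eq_mul]; rfl
    _ = _ := by
      rw [det_of_isLowerTriangular N hNtri, Fin.prod_univ_succ, hN0, if_pos rfl]
      simp only [hdiag, prod_const, card_univ, Fintype.card_fin]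
      ring

theorem prod_mul_det_eq_det_arrowhead {a : R} {row col scale rowQuot diagQuot : Fin (n + 1) → R}
    (hrow : ∀ j, scale j * rowQuot j = row j) (hdiag : ∀ j, scale j * diagQuot j = a) :
    (∏ j ∈ univ.erase 0, scale j) * (of fun i j =>
        if j = 0 then col i else if i = 0 then rowQuot j else if i = j then diagQuot j else 0).det =
      (arrowhead a row col).det := by
  set v : Fin (n + 1) → R := fun j => if j = 0 then 1 else scale j
  have hv : ∏ j, v j = ∏ j ∈ univ.erase 0, scale j := by
    rw [← mul_prod_erase univ v (mem_univ 0)]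
    simp only [v, if_pos rfl, one_mul]
    exact prod_congr rfl fun j hj => if_neg (ne_of_mem_erase hj)
  rw [← hv, ← det_mul_row]
  congr 1
  ext i j
  obtain rfl | hj := eq_or_ne j 0
  · simp [v, arrowhead]
  · by_cases hi : i = 0 <;> by_cases hij : i = j <;> simp [v, arrowhead, hi, hj, hij, hrow, hdiag]

end Matrix

/-- the determinant of the matrix `R` from the previous construction equals
`d · d_1^{s-3} / (gcd(d_1,d_2) ⋯ gcd(d_1,d_{s-1}))`.  Here `s - 1 = m + 2`, so
`s - 3 = m`. -/
theorem stmt5 (m : ℕ) (d : Fin (m + 2) → ℤ) (hd : ∀ i, 0 < d i)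
    (h : Fin (m + 2) → ℤ) (hB : ∑ i, h i * d i = Finset.univ.gcd d) :
    Matrix.det
      (fun i j : Fin (m + 2) =>
        if j = 0 then h i
        else if i = 0 then -(d j / (Int.gcd (d 0) (d j) : ℤ))
        else if i = j then d 0 / (Int.gcd (d 0) (d j) : ℤ)
        else 0) =
      Finset.univ.gcd d * (d 0) ^ m /
        ∏ i ∈ Finset.univ.erase (0 : Fin (m + 2)), (Int.gcd (d 0) (d i) : ℤ) := by
  have hscaled := Matrix.prod_mul_det_eq_det_arrowhead (a := d 0) (row := fun j => -d j) (col := h)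
    (scale := fun j => (Int.gcd (d 0) (d j) : ℤ))
    (fun j => by rw [mul_neg, Int.mul_ediv_cancel' (Int.gcd_dvd_right _ _)])
    (fun j => Int.mul_ediv_cancel' (Int.gcd_dvd_left _ _))
  rw [Matrix.det_arrowhead (IsRegular.of_ne_zero (hd 0).ne').left] at hscaled
  have hprod : ∏ i ∈ univ.erase (0 : Fin (m + 2)), (Int.gcd (d 0) (d i) : ℤ) ≠ 0 :=
    prod_ne_zero_iff.mpr fun i _ => Int.natCast_ne_zero.mpr (Int.gcd_ne_zero_left (hd 0).ne')
  refine Int.eq_ediv_of_mul_eq_right hprod (hscaled.trans ?_)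
  rw [← hB, Fin.sum_univ_succ (n := m + 1)]
  simp only [neg_mul, sum_neg_distrib, mul_comm (d _)]
  ring
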